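/- arXiv:1712.06945 — 2 statements merged into one kernel-verified Lean document; each statement's English description precedes it below -/
import Mathlib

section
/- Let A ∈ End(ℝ⁴) and let φ(A) ∈ End(Λ²ℝ⁴) be the induced derivation φ(A)(v∧w) = Av∧w + v∧Aw. Let F ⊆ ℝ⁴ be a line and F¹ ⊇ F a 3-dimensional subspace, and set f := F ∧ F¹ ⊆ Λ²ℝ⁴. Then A F = 0 and A F¹ ⊆ F (i.e., A ∈ Θ) if and only if φ(A) annihilates f and maps f^⊥ into f, where orthogonality is with respect to the wedge-product form; i.e., φ restricts to a linear isomorphism Θ → f ∧ f^⊥. -/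
open ExteriorAlgebra Module Submodule

/-!
Choose a basis `e` adapted to the flag, `F = ⟨e₀⟩ ⊆ F¹ = ⟨e₀, e₁, e₂⟩`, and write `εᵢⱼ = eᵢ ∧ eⱼ`.
Then `f = ⟨ε₀₁, ε₀₂⟩`, `f^⊥ ∩ Λ² = ⟨ε₀₁, ε₀₂, ε₀₃, ε₁₂⟩`, and the trace-free elements of `Θ` are the
maps `thetaMap e p₁ p₂ q₀ q₁ q₂`: `Θ` forces every diagonal entry but the last to vanish, and the
trace kills the last one. Coordinates in the basis `εᵢⱼ` of `Λ²` are read off by multiplying with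
the complementary bivector and taking the coefficient of `e₀ ∧ e₁ ∧ e₂ ∧ e₃`.

`φ(thetaMap …)` is explicit: it kills `f`, maps `ε₀₃, ε₁₂` into `f`, and its values on
`ε₀₃, ε₁₂, ε₁₃` return all five parameters, which gives injectivity. Conversely `φ(A) f = 0` and
`φ(A) ε₁₂ ∈ f` force `A ∈ Θ`: the diagonal comes from `a₀₀ + a₁₁ = a₀₀ + a₂₂ = a₁₁ + a₂₂ = 0`, which
needs `2 ≠ 0`. Finally, for a skew `C` killing `f` and mapping `f^⊥` into `f`, pairing `C ε₁₃` and
`C ε₂₃` with the basis leaves five free coefficients, the parameters of a `thetaMap` inducing `C`.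
-/

namespace ExteriorAlgebra

variable {R M : Type*} [CommRing R] [AddCommGroup M] [Module R M]

theorem ι_mul_ι_eq_neg (x y : M) : ι R x * ι R y = -(ι R y * ι R x) :=
  eq_neg_of_add_eq_zero_left (ι_add_mul_swap x y)

theorem ι_mul_ι_mul_eq_neg (x y : M) (t : ExteriorAlgebra R M) :
    ι R x * (ι R y * t) = -(ι R y * (ι R x * t)) := by
  rw [← mul_assoc, ← mul_assoc, ι_mul_ι_eq_neg, neg_mul]

@[simp]
theorem ι_mul_ι_mul_self (x : M) (t : ExteriorAlgebra R M) : ι R x * (ι R x * t) = 0 := by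
  rw [← mul_assoc, ι_sq_zero, zero_mul]

theorem ι_mul_ι_mem_exteriorPower_two (v w : M) : ι R v * ι R w ∈ ⋀[R]^2 M := by
  rw [exteriorPower, sq]
  exact mul_mem_mul (LinearMap.mem_range_self _ _) (LinearMap.mem_range_self _ _)

section Basis4

variable (e : Basis (Fin 4) R M)

local notation "ε" i:max j:max => ι R (e i) * ι R (e j)

@[simp]
theorem ι_basis_mul_ι_basis_of_lt {i j : Fin 4} (_ : j < i) : ε i j = -ε j i :=
  ι_mul_ι_eq_neg _ _

@[simp]
theorem ι_basis_mul_ι_basis_mul_of_lt {i j : Fin 4} (_ : j < i) (t : ExteriorAlgebra R M) :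
    ι R (e i) * (ι R (e j) * t) = -(ι R (e j) * (ι R (e i) * t)) :=
  ι_mul_ι_mul_eq_neg _ _ _

/-- The coefficient of `e 0 ∧ e 1 ∧ e 2 ∧ e 3`. -/
noncomputable def volForm : ExteriorAlgebra R M →ₗ[R] R :=
  liftAlternating fun
    | 4 => e.det
    | _ => 0

theorem volForm_ι_mul_ι_mul_ι_mul_ι (a b c d : M) :
    volForm e (ι R a * (ι R b * (ι R c * ι R d))) = e.det ![a, b, c, d] := by
  have h : ιMulti R 4 ![a, b, c, d] = ι R a * (ι R b * (ι R c * ι R d)) := by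
    simp [ιMulti_apply]
  rw [volForm, ← h, liftAlternating_apply_ιMulti]
  rfl

@[simp]
theorem volForm_top : volForm e (ι R (e 0) * (ι R (e 1) * (ι R (e 2) * ι R (e 3)))) = 1 := by
  rw [volForm_ι_mul_ι_mul_ι_mul_ι, ← e.det_self]
  congr 1
  ext i
  fin_cases i <;> rfl

theorem ι_eq_sum_repr (v : M) : ι R v = e.repr v 0 • ι R (e 0) + e.repr v 1 • ι R (e 1)
    + e.repr v 2 • ι R (e 2) + e.repr v 3 • ι R (e 3) := by
  conv_lhs => rw [← e.sum_repr v]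
  simp only [Fin.sum_univ_four, map_add, map_smul]

theorem ι_mul_ι_eq_sum_coords (a b : M) :
    ι R a * ι R b =
      (e.repr a 0 * e.repr b 1 - e.repr a 1 * e.repr b 0) • ε 0 1
      + (e.repr a 0 * e.repr b 2 - e.repr a 2 * e.repr b 0) • ε 0 2
      + (e.repr a 0 * e.repr b 3 - e.repr a 3 * e.repr b 0) • ε 0 3
      + (e.repr a 1 * e.repr b 2 - e.repr a 2 * e.repr b 1) • ε 1 2
      + (e.repr a 1 * e.repr b 3 - e.repr a 3 * e.repr b 1) • ε 1 3
      + (e.repr a 2 * e.repr b 3 - e.repr a 3 * e.repr b 2) • ε 2 3 := by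
  rw [ι_eq_sum_repr e a, ι_eq_sum_repr e b]
  simp only [add_mul, mul_add, smul_mul_assoc, mul_smul_comm, ι_sq_zero, smul_zero, add_zero,
    zero_add]
  simp only [ι_basis_mul_ι_basis_of_lt, Fin.reduceLT]
  module

theorem exists_coords_of_mem_exteriorPower_two {α : ExteriorAlgebra R M}
    (hα : α ∈ ⋀[R]^2 M) : ∃ c₀₁ c₀₂ c₀₃ c₁₂ c₁₃ c₂₃ : R,
      α = c₀₁ • ε 0 1 + c₀₂ • ε 0 2 + c₀₃ • ε 0 3 + c₁₂ • ε 1 2 + c₁₃ • ε 1 3 + c₂₃ • ε 2 3 := by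
  rw [← ιMulti_span_fixedDegree] at hα
  induction hα using span_induction with
  | mem _ hz =>
    obtain ⟨v, rfl⟩ := hz
    rw [ιMulti_apply]
    simp only [List.ofFn_succ, List.ofFn_zero, List.prod_cons, List.prod_nil, mul_one]
    exact ⟨_, _, _, _, _, _, ι_mul_ι_eq_sum_coords e _ _⟩
  | zero => exact ⟨0, 0, 0, 0, 0, 0, by simp⟩
  | add _ _ _ _ hy hz =>
    obtain ⟨c₀₁, c₀₂, c₀₃, c₁₂, c₁₃, c₂₃, rfl⟩ := hy
    obtain ⟨d₀₁, d₀₂, d₀₃, d₁₂, d₁₃, d₂₃, rfl⟩ := hz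
    exact ⟨c₀₁ + d₀₁, c₀₂ + d₀₂, c₀₃ + d₀₃, c₁₂ + d₁₂, c₁₃ + d₁₃, c₂₃ + d₂₃, by module⟩
  | smul r _ _ hy =>
    obtain ⟨c₀₁, c₀₂, c₀₃, c₁₂, c₁₃, c₂₃, rfl⟩ := hy
    exact ⟨r * c₀₁, r * c₀₂, r * c₀₃, r * c₁₂, r * c₁₃, r * c₂₃, by module⟩

theorem eqOn_exteriorPower_two {N : Type*} [AddCommGroup N] [Module R N]
    {f g : ExteriorAlgebra R M →ₗ[R] N}
    (h₀₁ : f (ε 0 1) = g (ε 0 1)) (h₀₂ : f (ε 0 2) = g (ε 0 2)) (h₀₃ : f (ε 0 3) = g (ε 0 3))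
    (h₁₂ : f (ε 1 2) = g (ε 1 2)) (h₁₃ : f (ε 1 3) = g (ε 1 3)) (h₂₃ : f (ε 2 3) = g (ε 2 3)) :
    ∀ α ∈ ⋀[R]^2 M, f α = g α := by
  intro α hα
  obtain ⟨c₀₁, c₀₂, c₀₃, c₁₂, c₁₃, c₂₃, rfl⟩ := exists_coords_of_mem_exteriorPower_two e hα
  simp [h₀₁, h₀₂, h₀₃, h₁₂, h₁₃, h₂₃]

end Basis4

end ExteriorAlgebra

def IsInducedDerivation {R M : Type*} [CommRing R] [AddCommGroup M] [Module R M]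
    (A : M →ₗ[R] M) (D : ExteriorAlgebra R M →ₗ[R] ExteriorAlgebra R M) : Prop :=
  ∀ v w, D (ι R v * ι R w) = ι R (A v) * ι R w + ι R v * ι R (A w)

section FlagBasis

variable {K V : Type*} [Field K] [AddCommGroup V] [Module K V] [FiniteDimensional K V]

theorem exists_mem_linearIndependent_snoc {n : ℕ} {v : Fin n → V} (hv : LinearIndependent K v)
    {W : Submodule K V} (hn : n < finrank K W) :
    ∃ w ∈ W, LinearIndependent K (Fin.snoc v w : Fin (n + 1) → V) := by
  have : ¬ W ≤ span K (Set.range v) := fun hle =>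
    (Submodule.finrank_mono hle).not_gt (by rwa [finrank_span_eq_card hv, Fintype.card_fin])
  obtain ⟨w, hwW, hw⟩ := SetLike.not_le_iff_exists.1 this
  exact ⟨w, hwW, linearIndependent_finSnoc.2 ⟨hv, hw⟩⟩

theorem exists_flag_basis (hV : finrank K V = 4) {F F₁ : Submodule K V}
    (hF : finrank K F = 1) (hF₁ : finrank K F₁ = 3) (hle : F ≤ F₁) :
    ∃ e : Basis (Fin 4) K V, F = K ∙ e 0 ∧ F₁ = span K {e 0, e 1, e 2} := by
  obtain ⟨v₀, hv₀, li₁⟩ := exists_mem_linearIndependent_snoc (v := ![]) (W := F)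
    (linearIndependent_empty_type) (by omega)
  obtain ⟨v₁, hv₁, li₂⟩ := exists_mem_linearIndependent_snoc li₁ (W := F₁) (by omega)
  obtain ⟨v₂, hv₂, li₃⟩ := exists_mem_linearIndependent_snoc li₂ (W := F₁) (by omega)
  obtain ⟨v₃, -, li₄⟩ := exists_mem_linearIndependent_snoc li₃ (W := ⊤) (by simp [hV])
  set e : Basis (Fin 4) K V := basisOfLinearIndependentOfCardEqFinrank li₄ (by simp [hV])
  have he : ⇑e = ![v₀, v₁, v₂, v₃] := by
    rw [coe_basisOfLinearIndependentOfCardEqFinrank]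
    ext i; fin_cases i <;> rfl
  refine ⟨e, (eq_of_le_of_finrank_le ?_ ?_).symm, (eq_of_le_of_finrank_le ?_ ?_).symm⟩
  · simpa [he] using hv₀
  · rw [hF, finrank_span_singleton (e.ne_zero 0)]
  · simp [he, span_le, Set.insert_subset_iff, hle hv₀, hv₁, hv₂]
  · have h := finrank_span_eq_card (e.linearIndependent.comp ![0, 1, 2] (by decide))
    have hrange : Set.range (e ∘ ![0, 1, 2]) = {e 0, e 1, e 2} := by
      ext v; simp [Fin.exists_fin_succ, eq_comm]
    rw [hrange, Fintype.card_fin] at h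
    rw [hF₁, h]

end FlagBasis

section Flag

variable {K V : Type*} [Field K] [AddCommGroup V] [Module K V] (e : Basis (Fin 4) K V)

local notation "ε" i:max j:max => ι K (e i) * ι K (e j)

theorem theta_iff_apply_basis {A : V →ₗ[K] V} :
    ((∀ v ∈ K ∙ e 0, A v = 0) ∧ ∀ v ∈ span K {e 0, e 1, e 2}, A v ∈ K ∙ e 0) ↔
      A (e 0) = 0 ∧ A (e 1) ∈ K ∙ e 0 ∧ A (e 2) ∈ K ∙ e 0 := by
  refine ⟨fun ⟨h₀, h₁⟩ => ⟨h₀ _ (mem_span_singleton_self _), h₁ _ (subset_span (by simp)),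
    h₁ _ (subset_span (by simp))⟩, fun ⟨h₀, h₁, h₂⟩ => ⟨fun v hv => ?_, fun v hv => ?_⟩⟩
  · obtain ⟨t, rfl⟩ := mem_span_singleton.1 hv
    simp [h₀]
  · refine (span_le (p := (K ∙ e 0).comap A)).2 ?_ hv
    simp [Set.insert_subset_iff, h₀, h₁, h₂]

theorem mem_span_basis_zero_iff {v : V} :
    v ∈ K ∙ e 0 ↔ e.repr v 1 = 0 ∧ e.repr v 2 = 0 ∧ e.repr v 3 = 0 := by
  refine ⟨fun hv => ?_, fun ⟨h₁, h₂, h₃⟩ => mem_span_singleton.2 ⟨e.repr v 0, ?_⟩⟩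
  · obtain ⟨t, rfl⟩ := mem_span_singleton.1 hv
    simp
  · conv_rhs => rw [← e.sum_repr v]
    simp only [Fin.sum_univ_four, h₁, h₂, h₃, zero_smul, add_zero]

noncomputable def thetaMap (p₁ p₂ q₀ q₁ q₂ : K) : V →ₗ[K] V :=
  e.constr K ![0, p₁ • e 0, p₂ • e 0, q₀ • e 0 + q₁ • e 1 + q₂ • e 2]

section thetaMap

variable (p₁ p₂ q₀ q₁ q₂ : K)

@[simp] theorem thetaMap_apply_zero : thetaMap e p₁ p₂ q₀ q₁ q₂ (e 0) = 0 := by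
  simp [thetaMap]

@[simp] theorem thetaMap_apply_one : thetaMap e p₁ p₂ q₀ q₁ q₂ (e 1) = p₁ • e 0 := by
  simp [thetaMap]

@[simp] theorem thetaMap_apply_two : thetaMap e p₁ p₂ q₀ q₁ q₂ (e 2) = p₂ • e 0 := by
  simp [thetaMap]

@[simp] theorem thetaMap_apply_three :
    thetaMap e p₁ p₂ q₀ q₁ q₂ (e 3) = q₀ • e 0 + q₁ • e 1 + q₂ • e 2 := by
  simp [thetaMap]

theorem trace_thetaMap : LinearMap.trace K V (thetaMap e p₁ p₂ q₀ q₁ q₂) = 0 := by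
  rw [LinearMap.trace_eq_matrix_trace K e, Matrix.trace]
  simp [LinearMap.toMatrix_apply, Fin.sum_univ_four]

theorem thetaMap_mem_theta :
    (∀ v ∈ K ∙ e 0, thetaMap e p₁ p₂ q₀ q₁ q₂ v = 0) ∧
      ∀ v ∈ span K {e 0, e 1, e 2}, thetaMap e p₁ p₂ q₀ q₁ q₂ v ∈ K ∙ e 0 :=
  (theta_iff_apply_basis e).2 ⟨by simp, by simp [smul_mem, mem_span_singleton_self],
    by simp [smul_mem, mem_span_singleton_self]⟩

end thetaMap

theorem exists_eq_thetaMap {A : V →ₗ[K] V} (htr : LinearMap.trace K V A = 0)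
    (hA : (∀ v ∈ K ∙ e 0, A v = 0) ∧ ∀ v ∈ span K {e 0, e 1, e 2}, A v ∈ K ∙ e 0) :
    ∃ p₁ p₂ q₀ q₁ q₂, A = thetaMap e p₁ p₂ q₀ q₁ q₂ := by
  obtain ⟨h₀, h₁, h₂⟩ := (theta_iff_apply_basis e).1 hA
  obtain ⟨p₁, hp₁⟩ := mem_span_singleton.1 h₁
  obtain ⟨p₂, hp₂⟩ := mem_span_singleton.1 h₂
  have h₃₃ : e.repr (A (e 3)) 3 = 0 := by
    rw [LinearMap.trace_eq_matrix_trace K e, Matrix.trace] at htr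
    simpa [LinearMap.toMatrix_apply, Fin.sum_univ_four, h₀, ← hp₁, ← hp₂] using htr
  obtain ⟨q₀, q₁, q₂, h₃⟩ : ∃ q₀ q₁ q₂ : K, A (e 3) = q₀ • e 0 + q₁ • e 1 + q₂ • e 2 := by
    refine ⟨e.repr (A (e 3)) 0, e.repr (A (e 3)) 1, e.repr (A (e 3)) 2, ?_⟩
    conv_lhs => rw [← e.sum_repr (A (e 3))]
    simp only [Fin.sum_univ_four, h₃₃, zero_smul, add_zero]
  refine ⟨p₁, p₂, q₀, q₁, q₂, e.ext fun i => ?_⟩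
  fin_cases i <;> simp [h₀, hp₁, hp₂, h₃]

def flagWedge : Submodule K (ExteriorAlgebra K V) := span K {ε 0 1, ε 0 2}

theorem span_ι_mul_ι_flag :
    span K {α | ∃ v ∈ K ∙ e 0, ∃ w ∈ span K {e 0, e 1, e 2}, α = ι K v * ι K w} = flagWedge e := by
  refine le_antisymm (span_le.2 ?_) (span_le.2 ?_)
  · rintro _ ⟨v, hv, w, hw, rfl⟩
    obtain ⟨t, rfl⟩ := mem_span_singleton.1 hv
    obtain ⟨a, u, hu, rfl⟩ := mem_span_insert.1 hw
    obtain ⟨b, c, rfl⟩ := mem_span_pair.1 hu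
    refine mem_span_pair.2 ⟨b * t, c * t, ?_⟩
    simp only [map_add, map_smul, mul_add, smul_mul_assoc, mul_smul_comm, ι_sq_zero, smul_zero,
      zero_add, smul_smul]
  · rintro _ (rfl | rfl)
    · exact subset_span ⟨e 0, mem_span_singleton_self _, e 1, subset_span (by simp), rfl⟩
    · exact subset_span ⟨e 0, mem_span_singleton_self _, e 2, subset_span (by simp), rfl⟩

theorem flagWedge_le_exteriorPower_two : flagWedge e ≤ ⋀[K]^2 V := by
  rw [flagWedge, span_le]
  rintro _ (rfl | rfl) <;> exact ι_mul_ι_mem_exteriorPower_two _ _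

theorem mul_eq_zero_of_mem_flagWedge {α : ExteriorAlgebra K V} (hα : α ∈ flagWedge e) :
    α * ε 0 3 = 0 ∧ α * ε 1 2 = 0 := by
  obtain ⟨a, b, rfl⟩ := mem_span_pair.1 hα
  constructor <;> simp [add_mul, mul_assoc]

theorem exists_coords_of_orthogonal_flagWedge {β : ExteriorAlgebra K V} (hβ : β ∈ ⋀[K]^2 V)
    (h : ∀ α ∈ flagWedge e, α * β = 0) :
    ∃ c₀₁ c₀₂ c₀₃ c₁₂ : K, β = c₀₁ • ε 0 1 + c₀₂ • ε 0 2 + c₀₃ • ε 0 3 + c₁₂ • ε 1 2 := by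
  obtain ⟨c₀₁, c₀₂, c₀₃, c₁₂, c₁₃, c₂₃, rfl⟩ := exists_coords_of_mem_exteriorPower_two e hβ
  have h₂₃ := congrArg (volForm e) (h _ (subset_span (by simp : ε 0 1 ∈ _)))
  have h₁₃ := congrArg (volForm e) (h _ (subset_span (by simp : ε 0 2 ∈ _)))
  simp [mul_add, mul_assoc] at h₂₃ h₁₃
  exact ⟨c₀₁, c₀₂, c₀₃, c₁₂, by simp [h₂₃, h₁₃]⟩

theorem IsInducedDerivation.apply_of_thetaMap {p₁ p₂ q₀ q₁ q₂ : K}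
    {D : ExteriorAlgebra K V →ₗ[K] ExteriorAlgebra K V}
    (hD : IsInducedDerivation (thetaMap e p₁ p₂ q₀ q₁ q₂) D) :
    D (ε 0 1) = 0 ∧ D (ε 0 2) = 0 ∧ D (ε 0 3) = q₁ • ε 0 1 + q₂ • ε 0 2 ∧
      D (ε 1 2) = -p₂ • ε 0 1 + p₁ • ε 0 2 ∧
      D (ε 1 3) = -q₀ • ε 0 1 + p₁ • ε 0 3 + q₂ • ε 1 2 ∧
      D (ε 2 3) = -q₀ • ε 0 2 + p₂ • ε 0 3 - q₁ • ε 1 2 := by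
  refine ⟨?_, ?_, ?_, ?_, ?_, ?_⟩ <;>
    simp [hD _ _, mul_add] <;> module

theorem IsInducedDerivation.mem_fWedgeFPerp_of_thetaMap {p₁ p₂ q₀ q₁ q₂ : K}
    {D : ExteriorAlgebra K V →ₗ[K] ExteriorAlgebra K V}
    (hD : IsInducedDerivation (thetaMap e p₁ p₂ q₀ q₁ q₂) D) :
    (∀ α ∈ flagWedge e, D α = 0) ∧
      ∀ β ∈ ⋀[K]^2 V, (∀ α ∈ flagWedge e, α * β = 0) → D β ∈ flagWedge e := by
  obtain ⟨h₀₁, h₀₂, h₀₃, h₁₂, -, -⟩ := hD.apply_of_thetaMap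
  refine ⟨fun α hα => ?_, fun β hβ h => ?_⟩
  · obtain ⟨a, b, rfl⟩ := mem_span_pair.1 hα
    simp [h₀₁, h₀₂]
  · obtain ⟨c₀₁, c₀₂, c₀₃, c₁₂, rfl⟩ := exists_coords_of_orthogonal_flagWedge e hβ h
    refine mem_span_pair.2 ⟨c₀₃ * q₁ - c₁₂ * p₂, c₀₃ * q₂ + c₁₂ * p₁, ?_⟩
    simp only [map_add, map_smul, h₀₁, h₀₂, h₀₃, h₁₂]
    module

theorem IsInducedDerivation.theta_of_mem_fWedgeFPerp [NeZero (2 : K)] {A : V →ₗ[K] V}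
    {D : ExteriorAlgebra K V →ₗ[K] ExteriorAlgebra K V} (hD : IsInducedDerivation A D)
    (hkill : ∀ α ∈ flagWedge e, D α = 0)
    (hperp : ∀ β ∈ ⋀[K]^2 V, (∀ α ∈ flagWedge e, α * β = 0) → D β ∈ flagWedge e) :
    (∀ v ∈ K ∙ e 0, A v = 0) ∧ ∀ v ∈ span K {e 0, e 1, e 2}, A v ∈ K ∙ e 0 := by
  have h₀₁ := hkill _ (subset_span (by simp : ε 0 1 ∈ _))
  have h₀₂ := hkill _ (subset_span (by simp : ε 0 2 ∈ _))
  obtain ⟨a, b, h₁₂⟩ := mem_span_pair.1 (hperp _ (ι_mul_ι_mem_exteriorPower_two _ _)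
    fun α hα => (mul_eq_zero_of_mem_flagWedge e hα).2)
  rw [hD, ι_eq_sum_repr e (A (e 0)), ι_eq_sum_repr e (A (e 1))] at h₀₁
  rw [hD, ι_eq_sum_repr e (A (e 0)), ι_eq_sum_repr e (A (e 2))] at h₀₂
  rw [hD, ι_eq_sum_repr e (A (e 1)), ι_eq_sum_repr e (A (e 2))] at h₁₂
  have pair {x y : ExteriorAlgebra K V} (h : x = y) (i j : Fin 4) :=
    congrArg (fun z => volForm e (z * ε i j)) h
  have e₁ := pair h₀₁ 2 3
  have e₂ := pair h₀₁ 1 3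
  have e₃ := pair h₀₁ 1 2
  have e₄ := pair h₀₁ 0 3
  have e₅ := pair h₀₁ 0 2
  have e₆ := pair h₀₂ 1 3
  have e₇ := pair h₀₂ 2 3
  have e₈ := pair h₀₂ 1 2
  have e₉ := pair h₀₂ 0 3
  have e₁₀ := pair h₁₂ 0 3
  simp [add_mul, mul_add, mul_assoc] at e₁ e₂ e₃ e₄ e₅ e₆ e₇ e₈ e₉ e₁₀
  have d₀ : e.repr (A (e 0)) 0 = 0 := by
    have h : (2 : K) * e.repr (A (e 0)) 0 = 0 := by linear_combination e₁ - e₆ + e₁₀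
    exact (mul_eq_zero.1 h).resolve_left two_ne_zero
  have d₁ : e.repr (A (e 1)) 1 = 0 := by linear_combination e₁ - d₀
  have d₂ : e.repr (A (e 2)) 2 = 0 := by linear_combination -e₆ - d₀
  refine (theta_iff_apply_basis e).2 ⟨e.forall_coord_eq_zero_iff.1 fun i => ?_,
    (mem_span_basis_zero_iff e).2 ⟨d₁, e₂, e₃⟩, (mem_span_basis_zero_iff e).2 ⟨e₇, d₂, e₈⟩⟩
  fin_cases i <;> simp [d₀, e₉, e₄, e₅]

theorem IsInducedDerivation.thetaMap_eq_of_eqOn {p₁ p₂ q₀ q₁ q₂ p₁' p₂' q₀' q₁' q₂' : K}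
    {D D' : ExteriorAlgebra K V →ₗ[K] ExteriorAlgebra K V}
    (hD : IsInducedDerivation (thetaMap e p₁ p₂ q₀ q₁ q₂) D)
    (hD' : IsInducedDerivation (thetaMap e p₁' p₂' q₀' q₁' q₂') D')
    (h : ∀ α ∈ ⋀[K]^2 V, D α = D' α) :
    thetaMap e p₁ p₂ q₀ q₁ q₂ = thetaMap e p₁' p₂' q₀' q₁' q₂' := by
  obtain ⟨-, -, h₀₃, h₁₂, h₁₃, -⟩ := hD.apply_of_thetaMap
  obtain ⟨-, -, h₀₃', h₁₂', h₁₃', -⟩ := hD'.apply_of_thetaMap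
  have e₀₃ := h _ (ι_mul_ι_mem_exteriorPower_two (e 0) (e 3))
  have e₁₂ := h _ (ι_mul_ι_mem_exteriorPower_two (e 1) (e 2))
  have e₁₃ := h _ (ι_mul_ι_mem_exteriorPower_two (e 1) (e 3))
  rw [h₀₃, h₀₃'] at e₀₃
  rw [h₁₂, h₁₂'] at e₁₂
  rw [h₁₃, h₁₃'] at e₁₃
  have pair {x y : ExteriorAlgebra K V} (h : x = y) (i j : Fin 4) :=
    congrArg (fun z => volForm e (z * ε i j)) h
  have r₁ := pair e₀₃ 2 3
  have r₂ := pair e₀₃ 1 3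
  have r₃ := pair e₁₂ 2 3
  have r₄ := pair e₁₂ 1 3
  have r₅ := pair e₁₃ 2 3
  simp [add_mul, mul_assoc] at r₁ r₂ r₃ r₄ r₅
  subst r₁ r₂ r₃ r₄ r₅
  rfl

theorem exists_apply_complement_of_skew [NeZero (2 : K)]
    {C : ExteriorAlgebra K V →ₗ[K] ExteriorAlgebra K V} {s₁ s₂ t₁ t₂ : K}
    (hC : ∀ α ∈ ⋀[K]^2 V, C α ∈ ⋀[K]^2 V)
    (hskew : ∀ α ∈ ⋀[K]^2 V, ∀ β ∈ ⋀[K]^2 V, C α * β = -(α * C β))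
    (h₀₁ : C (ε 0 1) = 0) (h₀₂ : C (ε 0 2) = 0) (h₀₃ : C (ε 0 3) = s₁ • ε 0 1 + s₂ • ε 0 2)
    (h₁₂ : C (ε 1 2) = t₁ • ε 0 1 + t₂ • ε 0 2) :
    ∃ u : K, C (ε 1 3) = u • ε 0 1 + t₂ • ε 0 3 + s₂ • ε 1 2 ∧
      C (ε 2 3) = u • ε 0 2 - t₁ • ε 0 3 - s₁ • ε 1 2 := by
  have mem (i j : Fin 4) : ε i j ∈ ⋀[K]^2 V := ι_mul_ι_mem_exteriorPower_two _ _
  obtain ⟨u₀₁, u₀₂, u₀₃, u₁₂, u₁₃, u₂₃, h₁₃⟩ :=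
    exists_coords_of_mem_exteriorPower_two e (hC _ (mem 1 3))
  obtain ⟨d₀₁, d₀₂, d₀₃, d₁₂, d₁₃, d₂₃, h₂₃⟩ :=
    exists_coords_of_mem_exteriorPower_two e (hC _ (mem 2 3))
  have skew (i j k l : Fin 4) :
      volForm e (C (ε i j) * ε k l) = -volForm e (ε i j * C (ε k l)) := by
    rw [hskew _ (mem i j) _ (mem k l), map_neg]
  have r₁ := skew 0 1 1 3
  have r₂ := skew 0 2 1 3
  have r₃ := skew 0 3 1 3
  have r₄ := skew 1 2 1 3
  have r₅ := skew 1 3 1 3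
  have r₆ := skew 0 1 2 3
  have r₇ := skew 0 2 2 3
  have r₈ := skew 0 3 2 3
  have r₉ := skew 1 2 2 3
  have r₁₀ := skew 1 3 2 3
  have r₁₁ := skew 2 3 2 3
  simp [h₀₁, h₀₂, h₀₃, h₁₂, h₁₃, h₂₃, add_mul, mul_add, mul_assoc]
    at r₁ r₂ r₃ r₄ r₅ r₆ r₇ r₈ r₉ r₁₀ r₁₁
  have hu₀₂ : u₀₂ = 0 := by
    have h : (2 : K) * u₀₂ = 0 := by linear_combination -r₅
    exact (mul_eq_zero.1 h).resolve_left two_ne_zero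
  have hd₀₁ : d₀₁ = 0 := by
    have h : (2 : K) * d₀₁ = 0 := by linear_combination r₁₁
    exact (mul_eq_zero.1 h).resolve_left two_ne_zero
  refine ⟨u₀₁, ?_, ?_⟩
  · rw [h₁₃, r₁, ← r₂, ← r₃, ← r₄, hu₀₂]
    module
  · rw [h₂₃, r₆, ← r₇, r₈, r₉, r₁₀, hd₀₁]
    module

theorem exists_thetaMap_of_mem_fWedgeFPerp [NeZero (2 : K)]
    {C : ExteriorAlgebra K V →ₗ[K] ExteriorAlgebra K V}
    (hC : ∀ α ∈ ⋀[K]^2 V, C α ∈ ⋀[K]^2 V)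
    (hskew : ∀ α ∈ ⋀[K]^2 V, ∀ β ∈ ⋀[K]^2 V, C α * β = -(α * C β))
    (hkill : ∀ α ∈ flagWedge e, C α = 0)
    (hperp : ∀ β ∈ ⋀[K]^2 V, (∀ α ∈ flagWedge e, α * β = 0) → C β ∈ flagWedge e) :
    ∃ p₁ p₂ q₀ q₁ q₂ : K, ∀ D, IsInducedDerivation (thetaMap e p₁ p₂ q₀ q₁ q₂) D →
      ∀ α ∈ ⋀[K]^2 V, C α = D α := by
  have h₀₁ := hkill _ (subset_span (by simp : ε 0 1 ∈ _))
  have h₀₂ := hkill _ (subset_span (by simp : ε 0 2 ∈ _))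
  obtain ⟨s₁, s₂, h₀₃⟩ := mem_span_pair.1 (hperp _ (ι_mul_ι_mem_exteriorPower_two _ _)
    fun α hα => (mul_eq_zero_of_mem_flagWedge e hα).1)
  obtain ⟨t₁, t₂, h₁₂⟩ := mem_span_pair.1 (hperp _ (ι_mul_ι_mem_exteriorPower_two _ _)
    fun α hα => (mul_eq_zero_of_mem_flagWedge e hα).2)
  obtain ⟨u, h₁₃, h₂₃⟩ :=
    exists_apply_complement_of_skew e hC hskew h₀₁ h₀₂ h₀₃.symm h₁₂.symm
  refine ⟨t₂, -t₁, -u, s₁, s₂, fun D hD => ?_⟩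
  obtain ⟨D₀₁, D₀₂, D₀₃, D₁₂, D₁₃, D₂₃⟩ := hD.apply_of_thetaMap
  refine eqOn_exteriorPower_two e ?_ ?_ ?_ ?_ ?_ ?_
  · rw [h₀₁, D₀₁]
  · rw [h₀₂, D₀₂]
  · rw [← h₀₃, D₀₃]
  · rw [← h₁₂, D₁₂, neg_neg]
  · rw [h₁₃, D₁₃, neg_neg]
  · rw [h₂₃, D₂₃]
    module

end Flag

theorem theta_iso_f_wedge_f_perp_general
    (Ω : ExteriorAlgebra ℝ (Fin 4 → ℝ)) (hΩ : Ω ≠ 0)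
    (B : ExteriorAlgebra ℝ (Fin 4 → ℝ) → ExteriorAlgebra ℝ (Fin 4 → ℝ) → ℝ)
    (hB : ∀ α ∈ ⋀[ℝ]^2 (Fin 4 → ℝ), ∀ β ∈ ⋀[ℝ]^2 (Fin 4 → ℝ), α * β = B α β • Ω)
    (φ : ((Fin 4 → ℝ) →ₗ[ℝ] (Fin 4 → ℝ)) →
      (ExteriorAlgebra ℝ (Fin 4 → ℝ) →ₗ[ℝ] ExteriorAlgebra ℝ (Fin 4 → ℝ)))
    (hφ : ∀ A (v w : Fin 4 → ℝ),
      φ A (ι ℝ v * ι ℝ w) = ι ℝ (A v) * ι ℝ w + ι ℝ v * ι ℝ (A w))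
    (F F₁ : Submodule ℝ (Fin 4 → ℝ))
    (hF : Module.finrank ℝ F = 1) (hF₁ : Module.finrank ℝ F₁ = 3) (hle : F ≤ F₁)
    (f : Submodule ℝ (ExteriorAlgebra ℝ (Fin 4 → ℝ)))
    (hf : f = Submodule.span ℝ {α | ∃ v ∈ F, ∃ w ∈ F₁, α = ι ℝ v * ι ℝ w}) :
    (∀ A : (Fin 4 → ℝ) →ₗ[ℝ] (Fin 4 → ℝ), LinearMap.trace ℝ (Fin 4 → ℝ) A = 0 →
      (((∀ v ∈ F, A v = 0) ∧ (∀ v ∈ F₁, A v ∈ F)) ↔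
        ((∀ α ∈ f, φ A α = 0) ∧
         (∀ β ∈ ⋀[ℝ]^2 (Fin 4 → ℝ), (∀ α ∈ f, B α β = 0) → φ A β ∈ f)))) ∧
    (∀ A A' : (Fin 4 → ℝ) →ₗ[ℝ] (Fin 4 → ℝ),
      LinearMap.trace ℝ (Fin 4 → ℝ) A = 0 → LinearMap.trace ℝ (Fin 4 → ℝ) A' = 0 →
      (∀ v ∈ F, A v = 0) → (∀ v ∈ F₁, A v ∈ F) →
      (∀ v ∈ F, A' v = 0) → (∀ v ∈ F₁, A' v ∈ F) →
      (∀ α ∈ ⋀[ℝ]^2 (Fin 4 → ℝ), φ A α = φ A' α) → A = A') ∧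
    (∀ C : ExteriorAlgebra ℝ (Fin 4 → ℝ) →ₗ[ℝ] ExteriorAlgebra ℝ (Fin 4 → ℝ),
      (∀ α ∈ ⋀[ℝ]^2 (Fin 4 → ℝ), C α ∈ ⋀[ℝ]^2 (Fin 4 → ℝ)) →
      (∀ α ∈ ⋀[ℝ]^2 (Fin 4 → ℝ), ∀ β ∈ ⋀[ℝ]^2 (Fin 4 → ℝ),
        B (C α) β = - B α (C β)) →
      (∀ α ∈ f, C α = 0) →
      (∀ β ∈ ⋀[ℝ]^2 (Fin 4 → ℝ), (∀ α ∈ f, B α β = 0) → C β ∈ f) →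
      ∃ A : (Fin 4 → ℝ) →ₗ[ℝ] (Fin 4 → ℝ), LinearMap.trace ℝ (Fin 4 → ℝ) A = 0 ∧
        (∀ v ∈ F, A v = 0) ∧ (∀ v ∈ F₁, A v ∈ F) ∧
        ∀ α ∈ ⋀[ℝ]^2 (Fin 4 → ℝ), C α = φ A α) := by
  obtain ⟨e, rfl, rfl⟩ := exists_flag_basis (by simp) hF hF₁ hle
  rw [span_ι_mul_ι_flag] at hf
  subst hf
  have hB₀ : ∀ α ∈ ⋀[ℝ]^2 (Fin 4 → ℝ), ∀ β ∈ ⋀[ℝ]^2 (Fin 4 → ℝ), B α β = 0 ↔ α * β = 0 :=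
    fun α hα β hβ => by rw [hB α hα β hβ, smul_eq_zero, or_iff_left hΩ]
  have hperp (β) (hβ : β ∈ ⋀[ℝ]^2 (Fin 4 → ℝ)) :
      (∀ α ∈ flagWedge e, B α β = 0) ↔ ∀ α ∈ flagWedge e, α * β = 0 :=
    forall₂_congr fun α hα => hB₀ α (flagWedge_le_exteriorPower_two e hα) β hβ
  refine ⟨fun A htr => ⟨fun hA => ?_, fun ⟨hkill, hmap⟩ => ?_⟩,
    fun A A' htr htr' hA₀ hA₁ hA₀' hA₁' h => ?_, fun C hC hCskew hkill hmap => ?_⟩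
  · obtain ⟨p₁, p₂, q₀, q₁, q₂, rfl⟩ := exists_eq_thetaMap e htr hA
    obtain ⟨hkill, hmap⟩ := IsInducedDerivation.mem_fWedgeFPerp_of_thetaMap e (hφ _)
    exact ⟨hkill, fun β hβ h => hmap β hβ ((hperp β hβ).1 h)⟩
  · exact IsInducedDerivation.theta_of_mem_fWedgeFPerp e (hφ A) hkill
      fun β hβ h => hmap β hβ ((hperp β hβ).2 h)
  · obtain ⟨p₁, p₂, q₀, q₁, q₂, rfl⟩ := exists_eq_thetaMap e htr ⟨hA₀, hA₁⟩
    obtain ⟨p₁', p₂', q₀', q₁', q₂', rfl⟩ := exists_eq_thetaMap e htr' ⟨hA₀', hA₁'⟩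
    exact IsInducedDerivation.thetaMap_eq_of_eqOn e (hφ _) (hφ _) h
  · have hskew (α) (hα : α ∈ ⋀[ℝ]^2 (Fin 4 → ℝ)) (β) (hβ : β ∈ ⋀[ℝ]^2 (Fin 4 → ℝ)) :
        C α * β = -(α * C β) := by
      rw [hB _ (hC α hα) _ hβ, hB _ hα _ (hC β hβ), hCskew α hα β hβ, neg_smul]
    obtain ⟨p₁, p₂, q₀, q₁, q₂, hCD⟩ := exists_thetaMap_of_mem_fWedgeFPerp e hC hskew hkill
      fun β hβ h => hmap β hβ ((hperp β hβ).2 h)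
    obtain ⟨hA₀, hA₁⟩ := thetaMap_mem_theta e p₁ p₂ q₀ q₁ q₂
    exact ⟨_, trace_thetaMap .., hA₀, hA₁, hCD _ (hφ _)⟩

/-- for a flag `F ⊆ F₁ ⊆ ℝ⁴` (`dim F = 1`, `dim F₁ = 3`) set
`f := F ∧ F₁ ⊆ Λ²ℝ⁴`.  For trace-free `A`, `A F = 0 ∧ A F₁ ⊆ F` (i.e. `A ∈ Θ`) iff the
induced derivation `φ(A)` annihilates `f` and maps `f^⊥` into `f` (orthogonality for the
wedge form `B`); moreover `φ` restricts to a linear isomorphism `Θ → f ∧ f^⊥`: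
it is injective on `Θ`, and every skew-adjoint endomorphism of `Λ²ℝ⁴` killing `f` and
mapping `f^⊥` into `f` arises as `φ(A)` for some `A ∈ Θ`. -/
theorem theta_iso_f_wedge_f_perp
    (Ω : ExteriorAlgebra ℝ (Fin 4 → ℝ)) (hΩmem : Ω ∈ ⋀[ℝ]^4 (Fin 4 → ℝ)) (hΩ : Ω ≠ 0)
    (B : ExteriorAlgebra ℝ (Fin 4 → ℝ) → ExteriorAlgebra ℝ (Fin 4 → ℝ) → ℝ)
    (hB : ∀ α ∈ ⋀[ℝ]^2 (Fin 4 → ℝ), ∀ β ∈ ⋀[ℝ]^2 (Fin 4 → ℝ), α * β = B α β • Ω)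
    (φ : ((Fin 4 → ℝ) →ₗ[ℝ] (Fin 4 → ℝ)) →
      (ExteriorAlgebra ℝ (Fin 4 → ℝ) →ₗ[ℝ] ExteriorAlgebra ℝ (Fin 4 → ℝ)))
    (hφmem : ∀ A, ∀ α ∈ ⋀[ℝ]^2 (Fin 4 → ℝ), φ A α ∈ ⋀[ℝ]^2 (Fin 4 → ℝ))
    (hφ : ∀ A (v w : Fin 4 → ℝ),
      φ A (ι ℝ v * ι ℝ w) = ι ℝ (A v) * ι ℝ w + ι ℝ v * ι ℝ (A w))
    (F F₁ : Submodule ℝ (Fin 4 → ℝ))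
    (hF : Module.finrank ℝ F = 1) (hF₁ : Module.finrank ℝ F₁ = 3) (hle : F ≤ F₁)
    (f : Submodule ℝ (ExteriorAlgebra ℝ (Fin 4 → ℝ)))
    (hf : f = Submodule.span ℝ {α | ∃ v ∈ F, ∃ w ∈ F₁, α = ι ℝ v * ι ℝ w}) :
    (∀ A : (Fin 4 → ℝ) →ₗ[ℝ] (Fin 4 → ℝ), LinearMap.trace ℝ (Fin 4 → ℝ) A = 0 →
      (((∀ v ∈ F, A v = 0) ∧ (∀ v ∈ F₁, A v ∈ F)) ↔
        ((∀ α ∈ f, φ A α = 0) ∧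
         (∀ β ∈ ⋀[ℝ]^2 (Fin 4 → ℝ), (∀ α ∈ f, B α β = 0) → φ A β ∈ f)))) ∧
    (∀ A A' : (Fin 4 → ℝ) →ₗ[ℝ] (Fin 4 → ℝ),
      LinearMap.trace ℝ (Fin 4 → ℝ) A = 0 → LinearMap.trace ℝ (Fin 4 → ℝ) A' = 0 →
      (∀ v ∈ F, A v = 0) → (∀ v ∈ F₁, A v ∈ F) →
      (∀ v ∈ F, A' v = 0) → (∀ v ∈ F₁, A' v ∈ F) →
      (∀ α ∈ ⋀[ℝ]^2 (Fin 4 → ℝ), φ A α = φ A' α) → A = A') ∧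
    (∀ C : ExteriorAlgebra ℝ (Fin 4 → ℝ) →ₗ[ℝ] ExteriorAlgebra ℝ (Fin 4 → ℝ),
      (∀ α ∈ ⋀[ℝ]^2 (Fin 4 → ℝ), C α ∈ ⋀[ℝ]^2 (Fin 4 → ℝ)) →
      (∀ α ∈ ⋀[ℝ]^2 (Fin 4 → ℝ), ∀ β ∈ ⋀[ℝ]^2 (Fin 4 → ℝ),
        B (C α) β = - B α (C β)) →
      (∀ α ∈ f, C α = 0) →
      (∀ β ∈ ⋀[ℝ]^2 (Fin 4 → ℝ), (∀ α ∈ f, B α β = 0) → C β ∈ f) →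
      ∃ A : (Fin 4 → ℝ) →ₗ[ℝ] (Fin 4 → ℝ), LinearMap.trace ℝ (Fin 4 → ℝ) A = 0 ∧
        (∀ v ∈ F, A v = 0) ∧ (∀ v ∈ F₁, A v ∈ F) ∧
        ∀ α ∈ ⋀[ℝ]^2 (Fin 4 → ℝ), C α = φ A α) :=
  theta_iso_f_wedge_f_perp_general Ω hΩ B hB φ hφ F F₁ hF hF₁ hle f hf
end

section
/- Let F be a null line subbundle of the trivial bundle Σ × ℝ^{n+1,1} (a map into the projective light cone). Suppose h : Σ → O(n+1,1) satisfies h F = F pointwise and θ_h := h⁻¹dh takes values in F ∧ F^⊥ (so θ_h F = 0 and θ_h F^⊥ ⊆ Ω¹(F)). If F is an immersion with F^{(2)} = Σ × ℝ^{n+1,1}, then h ≡ id or h ≡ −id. -/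
private lemma mink_exists_pair (n : ℕ) (B : LinearMap.BilinForm ℝ (Fin (n + 2) → ℝ))
    (hB : ∀ v w : Fin (n + 2) → ℝ,
      B v w = (∑ i : Fin (n + 1), v i.castSucc * w i.castSucc)
        - v (Fin.last (n + 1)) * w (Fin.last (n + 1)))
    {v : Fin (n + 2) → ℝ} (hv : v ≠ 0) : ∃ w, B v w ≠ 0 := by
  refine ⟨fun i => if i = Fin.last (n + 1) then -v i else v i, ?_⟩
  have hcs : ∀ i : Fin (n + 1), i.castSucc ≠ Fin.last (n + 1) :=
    fun i => (Fin.castSucc_lt_last i).ne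
  have hformula : B v (fun i => if i = Fin.last (n + 1) then -v i else v i)
      = ∑ i : Fin (n + 2), v i * v i := by
    rw [hB]
    have h1 : ∀ i : Fin (n + 1),
        v i.castSucc * (if i.castSucc = Fin.last (n + 1) then -v i.castSucc else v i.castSucc)
          = v i.castSucc * v i.castSucc := by
      intro i; rw [if_neg (hcs i)]
    rw [Finset.sum_congr rfl (fun i _ => h1 i), if_pos rfl]
    rw [Fin.sum_univ_castSucc (f := fun i : Fin (n + 2) => v i * v i)]
    ring
  rw [hformula]
  intro hzero
  apply hv
  funext i
  have hnn : ∀ i ∈ (Finset.univ : Finset (Fin (n+2))), (0:ℝ) ≤ v i * v i := fun i _ => mul_self_nonneg _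
  have := (Finset.sum_eq_zero_iff_of_nonneg hnn).mp hzero i (Finset.mem_univ i)
  exact mul_self_eq_zero.mp this

private lemma mink_cone (n : ℕ) (B : LinearMap.BilinForm ℝ (Fin (n + 2) → ℝ))
    (hB : ∀ v w : Fin (n + 2) → ℝ,
      B v w = (∑ i : Fin (n + 1), v i.castSucc * w i.castSucc)
        - v (Fin.last (n + 1)) * w (Fin.last (n + 1)))
    {s v : Fin (n + 2) → ℝ} (hs : B s s = 0) (hs0 : s ≠ 0)
    (hv : B v v = 0) (hsv : B s v = 0) : ∃ t : ℝ, v = t • s := by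
  set u := s (Fin.last (n + 1)) with hu_def
  set t := v (Fin.last (n + 1)) with ht_def
  have h1 : ∑ i : Fin (n + 1), s i.castSucc * s i.castSucc = u * u := by
    have := hs; rw [hB] at this; linarith
  have h2 : ∑ i : Fin (n + 1), v i.castSucc * v i.castSucc = t * t := by
    have := hv; rw [hB] at this; linarith
  have h3 : ∑ i : Fin (n + 1), s i.castSucc * v i.castSucc = u * t := by
    have := hsv; rw [hB] at this; linarith
  have hu : u ≠ 0 := by
    intro hu0
    apply hs0
    have h10 : ∑ i : Fin (n + 1), s i.castSucc * s i.castSucc = 0 := by rw [h1, hu0]; ring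
    have hnn : ∀ i ∈ (Finset.univ : Finset (Fin (n+1))), (0:ℝ) ≤ s i.castSucc * s i.castSucc :=
      fun i _ => mul_self_nonneg _
    have hz := (Finset.sum_eq_zero_iff_of_nonneg hnn).mp h10
    funext i
    rcases Fin.eq_castSucc_or_eq_last i with ⟨j, rfl⟩ | rfl
    · exact mul_self_eq_zero.mp (hz j (Finset.mem_univ j))
    · exact hu0
  have key : ∑ i : Fin (n + 1), (u * v i.castSucc - t * s i.castSucc) ^ 2 = 0 := by
    have expand : ∀ i : Fin (n + 1), (u * v i.castSucc - t * s i.castSucc) ^ 2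
        = u ^ 2 * (v i.castSucc * v i.castSucc)
          - 2 * u * t * (s i.castSucc * v i.castSucc)
          + t ^ 2 * (s i.castSucc * s i.castSucc) := by intro i; ring
    rw [Finset.sum_congr rfl (fun i _ => expand i)]
    rw [Finset.sum_add_distrib, Finset.sum_sub_distrib,
      ← Finset.mul_sum, ← Finset.mul_sum, ← Finset.mul_sum, h1, h2, h3]
    ring
  have hterm : ∀ i : Fin (n + 1), u * v i.castSucc - t * s i.castSucc = 0 := by
    intro i
    have hnn : ∀ i ∈ (Finset.univ : Finset (Fin (n+1))), (0:ℝ) ≤ (u * v i.castSucc - t * s i.castSucc) ^ 2 :=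
      fun i _ => sq_nonneg _
    have := (Finset.sum_eq_zero_iff_of_nonneg hnn).mp key i (Finset.mem_univ i)
    exact pow_eq_zero_iff (two_ne_zero) |>.mp this
  refine ⟨t / u, ?_⟩
  funext i
  rcases Fin.eq_castSucc_or_eq_last i with ⟨j, rfl⟩ | rfl
  · show v j.castSucc = (t / u) • s j.castSucc
    rw [smul_eq_mul]
    have hj := hterm j
    field_simp
    linarith
  · show t = (t / u) • s (Fin.last (n + 1))
    rw [smul_eq_mul]; field_simp; rfl

set_option maxHeartbeats 1000000 in
/-- let `F` be a null line subbundle of `Σ × ℝ^{n+1,1}`, spanned by a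
smooth nowhere-zero null lift `σ`, which is an immersion with `F^{(2)} = Σ × ℝ^{n+1,1}`.
If `h : Σ → O(n+1,1)` satisfies `h F = F` and `θ_h = h⁻¹ dh` takes values in `F ∧ F^⊥`
(equivalently `dh σ = 0`, `dh(F^⊥) ⊆ F = h F` and `dh(V) ⊆ F^⊥ = h F^⊥`), then
`h ≡ id` or `h ≡ −id`. -/
theorem deformation_of_self_is_pm_id (n : ℕ)
    {E : Type*} [NormedAddCommGroup E] [NormedSpace ℝ E] [FiniteDimensional ℝ E]
    (B : LinearMap.BilinForm ℝ (Fin (n + 2) → ℝ))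
    (hB : ∀ v w : Fin (n + 2) → ℝ,
      B v w = (∑ i : Fin (n + 1), v i.castSucc * w i.castSucc)
        - v (Fin.last (n + 1)) * w (Fin.last (n + 1)))
    (σ : E → (Fin (n + 2) → ℝ)) (hσ : ContDiff ℝ (⊤ : ℕ∞) σ) (hσ0 : ∀ x, σ x ≠ 0)
    (hnull : ∀ x, B (σ x) (σ x) = 0)
    -- `F` is an immersion
    (himm : ∀ (p : E) (Y : E), Y ≠ 0 →
      fderiv ℝ σ p Y ∉ Submodule.span ℝ {σ p})
    -- the second derived bundle `F^{(2)}` is all of `ℝ^{n+1,1}`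
    (hder : ∀ p : E,
      Submodule.span ℝ
        ({σ p} ∪ Set.range (fderiv ℝ σ p) ∪
          Set.range (fun YZ : E × E =>
            fderiv ℝ (fun q => fderiv ℝ σ q YZ.2) p YZ.1)) = ⊤)
    (h : E → ((Fin (n + 2) → ℝ) →L[ℝ] (Fin (n + 2) → ℝ))) (hh : ContDiff ℝ (⊤ : ℕ∞) h)
    -- `h` takes values in `O(n+1,1)`
    (horth : ∀ x v w, B (h x v) (h x w) = B v w)
    -- `h F = F`
    (hhF : ∀ x, ∃ c : ℝ, h x (σ x) = c • σ x)
    -- `θ_h = h⁻¹ dh ∈ Ω¹(F ∧ F^⊥)`: `θ_h F = 0`, `θ_h F^⊥ ⊆ F`, `θ_h V ⊆ F^⊥`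
    (hθ1 : ∀ p X, fderiv ℝ h p X (σ p) = 0)
    (hθ2 : ∀ p X v, B (σ p) v = 0 →
      fderiv ℝ h p X v ∈ Submodule.span ℝ {σ p})
    (hθ3 : ∀ p X v, B (σ p) (fderiv ℝ h p X v) = 0) :
    (∀ x v, h x v = v) ∨ (∀ x v, h x v = -v) := by
  classical
  have hBsym : ∀ v w, B v w = B w v := by
    intro v w; rw [hB v w, hB w v]; simp [mul_comm]
  let M : (Fin (n + 2) → ℝ) →ₗ[ℝ] ((Fin (n + 2) → ℝ) →L[ℝ] ℝ) :=
    { toFun := fun v => LinearMap.toContinuousLinearMap (B v)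
      map_add' := by intro a b; ext w; simp
      map_smul' := by intro a b; ext w; simp }
  let Bc : (Fin (n + 2) → ℝ) →L[ℝ] ((Fin (n + 2) → ℝ) →L[ℝ] ℝ) :=
    LinearMap.toContinuousLinearMap M
  have hBc : ∀ v w, Bc v w = B v w := by intro v w; simp [Bc, M]
  have hσdiff : Differentiable ℝ σ := hσ.differentiable (by simp)
  have hhdiff : Differentiable ℝ h := hh.differentiable (by simp)
  have hσ1 : ContDiff ℝ (⊤ : ℕ∞) (fderiv ℝ σ) := hσ.fderiv_right (by simp)
  have hσ1diff : Differentiable ℝ (fderiv ℝ σ) := hσ1.differentiable (by simp)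
  have hQd : ∀ (p : E) (X : E), HasFDerivAt (fun q => fderiv ℝ σ q X)
      ((ContinuousLinearMap.apply ℝ (Fin (n + 2) → ℝ) X).comp (fderiv ℝ (fderiv ℝ σ) p)) p :=
    fun p X => by
    have H := ((ContinuousLinearMap.apply ℝ (Fin (n + 2) → ℝ) X).hasFDerivAt).comp p
      (hσ1diff p).hasFDerivAt
    simpa [Function.comp_def] using H
  have hQeq : ∀ p Y X, fderiv ℝ (fun q => fderiv ℝ σ q X) p Y = fderiv ℝ (fderiv ℝ σ) p Y X := by
    intro p Y X; rw [(hQd p X).fderiv]; rfl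
  have hBσ : ∀ p, HasFDerivAt (fun x => Bc (σ x)) (Bc.comp (fderiv ℝ σ p)) p :=
    fun p => (Bc.hasFDerivAt).comp p (hσdiff p).hasFDerivAt
  have hBsL : ∀ p X, B (σ p) (fderiv ℝ σ p X) = 0 := by
    intro p X
    have d1 : HasFDerivAt (fun x => Bc (σ x) (σ x))
        ((Bc (σ p)).comp (fderiv ℝ σ p) + (Bc.comp (fderiv ℝ σ p)).flip (σ p)) p :=
      (hBσ p).clm_apply (hσdiff p).hasFDerivAt
    have d0 : HasFDerivAt (fun x => Bc (σ x) (σ x)) (0 : E →L[ℝ] ℝ) p := by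
      have hz : (fun x : E => Bc (σ x) (σ x)) = fun _ => (0 : ℝ) := by
        funext x; rw [hBc]; exact hnull x
      rw [hz]; exact hasFDerivAt_const 0 p
    have heq := d1.unique d0
    have happ := ContinuousLinearMap.ext_iff.mp heq X
    simp only [ContinuousLinearMap.add_apply, ContinuousLinearMap.comp_apply,
      ContinuousLinearMap.flip_apply, ContinuousLinearMap.zero_apply, hBc] at happ
    have := hBsym (fderiv ℝ σ p X) (σ p)
    linarith
  have hBQ : ∀ p Y X, B (σ p) (fderiv ℝ (fderiv ℝ σ) p Y X)
      = - B (fderiv ℝ σ p Y) (fderiv ℝ σ p X) := by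
    intro p Y X
    have d1 : HasFDerivAt (fun x => Bc (σ x) (fderiv ℝ σ x X))
        ((Bc (σ p)).comp
            ((ContinuousLinearMap.apply ℝ (Fin (n + 2) → ℝ) X).comp (fderiv ℝ (fderiv ℝ σ) p))
          + (Bc.comp (fderiv ℝ σ p)).flip (fderiv ℝ σ p X)) p :=
      (hBσ p).clm_apply (hQd p X)
    have d0 : HasFDerivAt (fun x => Bc (σ x) (fderiv ℝ σ x X)) (0 : E →L[ℝ] ℝ) p := by
      have hz : (fun x : E => Bc (σ x) (fderiv ℝ σ x X)) = fun _ => (0 : ℝ) := by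
        funext x; rw [hBc]; exact hBsL x X
      rw [hz]; exact hasFDerivAt_const 0 p
    have heq := d1.unique d0
    have happ := ContinuousLinearMap.ext_iff.mp heq Y
    simp only [ContinuousLinearMap.add_apply, ContinuousLinearMap.comp_apply,
      ContinuousLinearMap.flip_apply, ContinuousLinearMap.zero_apply,
      ContinuousLinearMap.apply_apply, hBc] at happ
    linarith
  -- E is nontrivial
  have hX0 : ∃ X : E, X ≠ 0 := by
    by_contra hcon
    push_neg at hcon
    obtain ⟨w₀, hw₀⟩ := mink_exists_pair n B hB (hσ0 0)
    have hle : Submodule.span ℝ ({σ 0} ∪ Set.range (fderiv ℝ σ 0) ∪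
        Set.range (fun YZ : E × E => fderiv ℝ (fun q => fderiv ℝ σ q YZ.2) 0 YZ.1))
        ≤ Submodule.span ℝ {σ 0} := by
      rw [Submodule.span_le]
      rintro x ((hx | ⟨Y, rfl⟩) | ⟨YZ, rfl⟩)
      · rw [hx]; exact Submodule.subset_span rfl
      · rw [hcon Y, map_zero]; exact Submodule.zero_mem _
      · dsimp only; rw [hcon YZ.1, map_zero]; exact Submodule.zero_mem _
    have hw : w₀ ∈ Submodule.span ℝ {σ 0} := hle (by rw [hder 0]; trivial)
    obtain ⟨t, ht⟩ := Submodule.mem_span_singleton.mp hw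
    apply hw₀
    rw [← ht, map_smul, smul_eq_mul, hnull 0, mul_zero]
  obtain ⟨X₀, hX₀⟩ := hX0
  -- B(L X, σ p) = 0
  have hLs : ∀ p X, B (fderiv ℝ σ p X) (σ p) = 0 :=
    fun p X => (hBsym _ _).trans (hBsL p X)
  -- pointwise rigidity
  have key : ∀ p : E, ∃ c₀ : ℝ, (c₀ = 1 ∨ c₀ = -1) ∧ ∀ v, h p v = c₀ • v := by
    intro p
    obtain ⟨w₀, hw₀⟩ := mink_exists_pair n B hB (hσ0 p)
    have hnum : ContDiff ℝ (⊤ : ℕ∞) (fun x => Bc (h x (σ x)) w₀) := by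
      have h1 : ContDiff ℝ (⊤ : ℕ∞) (fun x => h x (σ x)) := hh.clm_apply hσ
      have h2 : ContDiff ℝ (⊤ : ℕ∞) (fun x => Bc (h x (σ x))) := Bc.contDiff.comp h1
      exact h2.clm_apply contDiff_const
    have hden : ContDiff ℝ (⊤ : ℕ∞) (fun x => Bc (σ x) w₀) :=
      (Bc.contDiff.comp hσ).clm_apply contDiff_const
    set c : E → ℝ := fun x => Bc (h x (σ x)) w₀ / Bc (σ x) w₀ with hc_def
    set U : Set E := {x | Bc (σ x) w₀ ≠ 0} with hU_def
    have hUopen : IsOpen U := by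
      have : U = (fun x => Bc (σ x) w₀) ⁻¹' ({0}ᶜ) := rfl
      rw [this]
      exact isOpen_compl_singleton.preimage hden.continuous
    have hpU : p ∈ U := by show Bc (σ p) w₀ ≠ 0; rw [hBc]; exact hw₀
    have hUc : ∀ q ∈ U, h q (σ q) = c q • σ q := by
      intro q hq
      obtain ⟨a, ha⟩ := hhF q
      have hca : c q = a := by
        have hqne : Bc (σ q) w₀ ≠ 0 := hq
        rw [hc_def]
        simp only [ha, map_smul, ContinuousLinearMap.coe_smul', Pi.smul_apply, smul_eq_mul]
        field_simp
      rw [ha, hca]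
    have hcC : ∀ q ∈ U, ContDiffAt ℝ (⊤ : ℕ∞) c q :=
      fun q hq => (hnum.contDiffAt).div (hden.contDiffAt) hq
    have hcdiff : ∀ q ∈ U, DifferentiableAt ℝ c q :=
      fun q hq => (hcC q hq).differentiableAt (by simp)
    -- F2 : action of h on first derivatives, on U
    have hF2 : ∀ q ∈ U, ∀ X, h q (fderiv ℝ σ q X)
        = (fderiv ℝ c q X) • σ q + c q • fderiv ℝ σ q X := by
      intro q hq X
      have dL : HasFDerivAt (fun x => h x (σ x))
          ((h q).comp (fderiv ℝ σ q) + (fderiv ℝ h q).flip (σ q)) q :=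
        (hhdiff q).hasFDerivAt.clm_apply (hσdiff q).hasFDerivAt
      have dR : HasFDerivAt (fun x => c x • σ x)
          (c q • fderiv ℝ σ q + (fderiv ℝ c q).smulRight (σ q)) q :=
        ((hcdiff q hq).hasFDerivAt).smul (hσdiff q).hasFDerivAt
      have hev : (fun x => h x (σ x)) =ᶠ[nhds q] (fun x => c x • σ x) :=
        Filter.eventually_of_mem (hUopen.mem_nhds hq) (fun x hx => hUc x hx)
      have heq := dL.unique (dR.congr_of_eventuallyEq hev)
      have happ := ContinuousLinearMap.ext_iff.mp heq X
      simp only [ContinuousLinearMap.add_apply, ContinuousLinearMap.comp_apply,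
        ContinuousLinearMap.flip_apply, ContinuousLinearMap.smul_apply,
        ContinuousLinearMap.smulRight_apply, ContinuousLinearMap.coe_smul',
        Pi.smul_apply] at happ
      rw [hθ1 q X, add_zero] at happ
      rw [happ]; abel
    -- F3 : action of h on second derivatives, at p
    have hcCp := hcC p hpU
    have hc1C : ContDiffAt ℝ (⊤ : ℕ∞) (fderiv ℝ c) p := hcCp.fderiv_right (by simp)
    have hF3 : ∀ Y X : E, ∃ μ : ℝ, h p (fderiv ℝ (fderiv ℝ σ) p Y X)
        = μ • σ p + (fderiv ℝ c p X) • fderiv ℝ σ p Y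
          + (fderiv ℝ c p Y) • fderiv ℝ σ p X
          + c p • fderiv ℝ (fderiv ℝ σ) p Y X := by
      intro Y X
      have dL : HasFDerivAt (fun x => h x (fderiv ℝ σ x X))
          ((h p).comp ((ContinuousLinearMap.apply ℝ (Fin (n + 2) → ℝ) X).comp
              (fderiv ℝ (fderiv ℝ σ) p))
            + (fderiv ℝ h p).flip (fderiv ℝ σ p X)) p :=
        (hhdiff p).hasFDerivAt.clm_apply (hQd p X)
      have ha : DifferentiableAt ℝ (fun x => fderiv ℝ c x X) p :=
        (hc1C.differentiableAt (by simp)).clm_apply (differentiableAt_const X)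
      have dR1 : HasFDerivAt (fun x => (fderiv ℝ c x X) • σ x)
          (fderiv ℝ c p X • fderiv ℝ σ p
            + (fderiv ℝ (fun x => fderiv ℝ c x X) p).smulRight (σ p)) p :=
        ha.hasFDerivAt.smul (hσdiff p).hasFDerivAt
      have dR2 : HasFDerivAt (fun x => c x • fderiv ℝ σ x X)
          (c p • ((ContinuousLinearMap.apply ℝ (Fin (n + 2) → ℝ) X).comp
              (fderiv ℝ (fderiv ℝ σ) p))
            + (fderiv ℝ c p).smulRight (fderiv ℝ σ p X)) p :=
        ((hcdiff p hpU).hasFDerivAt).smul (hQd p X)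
      have dR := dR1.add dR2
      have hev : (fun x => h x (fderiv ℝ σ x X)) =ᶠ[nhds p]
          (fun x => (fderiv ℝ c x X) • σ x + c x • fderiv ℝ σ x X) :=
        Filter.eventually_of_mem (hUopen.mem_nhds hpU) (fun q hq => hF2 q hq X)
      have heq := dL.unique (dR.congr_of_eventuallyEq hev)
      have happ := ContinuousLinearMap.ext_iff.mp heq Y
      simp only [ContinuousLinearMap.add_apply, ContinuousLinearMap.comp_apply,
        ContinuousLinearMap.flip_apply, ContinuousLinearMap.smul_apply,
        ContinuousLinearMap.smulRight_apply, ContinuousLinearMap.coe_smul',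
        Pi.smul_apply, ContinuousLinearMap.apply_apply] at happ
      obtain ⟨t, ht⟩ := Submodule.mem_span_singleton.mp
        (hθ2 p Y (fderiv ℝ σ p X) (hBsL p X))
      refine ⟨fderiv ℝ (fun x => fderiv ℝ c x X) p Y - t, ?_⟩
      rw [← ht] at happ
      have : h p (fderiv ℝ (fderiv ℝ σ) p Y X)
          = fderiv ℝ c p X • fderiv ℝ σ p Y
            + fderiv ℝ (fun x => fderiv ℝ c x X) p Y • σ p
            + (c p • fderiv ℝ (fderiv ℝ σ) p Y X + fderiv ℝ c p Y • fderiv ℝ σ p X)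
            - t • σ p := by
        rw [← happ]; abel
      rw [this, sub_smul]; abel
    -- basic nonvanishing facts
    have hL0 : ∀ X : E, X ≠ 0 → B (fderiv ℝ σ p X) (fderiv ℝ σ p X) ≠ 0 := by
      intro X hX hBLL
      obtain ⟨t, ht⟩ := mink_cone n B hB (hnull p) (hσ0 p) hBLL (hBsL p X)
      exact himm p X hX (Submodule.mem_span_singleton.mpr ⟨t, ht.symm⟩)
    have hceq : h p (σ p) = c p • σ p := hUc p hpU
    have hc0 : c p ≠ 0 := by
      intro hc0
      have e := horth p (σ p) w₀
      rw [hceq, hc0, zero_smul, map_zero, LinearMap.zero_apply] at e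
      exact hw₀ e.symm
    -- c p ^ 2 = 1
    have hcsq : c p ^ 2 = 1 := by
      have e := horth p (fderiv ℝ σ p X₀) (fderiv ℝ σ p X₀)
      rw [hF2 p hpU X₀] at e
      simp only [map_add, map_smul, LinearMap.add_apply, LinearMap.smul_apply,
        smul_eq_mul] at e
      rw [hnull p, hBsL p X₀, hLs p X₀] at e
      have hfac : (c p ^ 2 - 1) * B (fderiv ℝ σ p X₀) (fderiv ℝ σ p X₀) = 0 := by
        linear_combination e
      rcases mul_eq_zero.mp hfac with h1 | h2
      · linarith
      · exact absurd h2 (hL0 X₀ hX₀)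
    -- the derivative of c vanishes at p
    have hdc : ∀ X : E, fderiv ℝ c p X = 0 := by
      intro X
      by_cases hX : X = 0
      · rw [hX, map_zero]
      obtain ⟨μ, hμ⟩ := hF3 X X
      have e := horth p (fderiv ℝ σ p X) (fderiv ℝ (fderiv ℝ σ) p X X)
      rw [hF2 p hpU X, hμ] at e
      simp only [map_add, map_smul, LinearMap.add_apply, LinearMap.smul_apply,
        smul_eq_mul] at e
      rw [hnull p, hBsL p X, hLs p X, hBQ p X X] at e
      have hfac : c p * (fderiv ℝ c p X
          * B (fderiv ℝ σ p X) (fderiv ℝ σ p X)) = 0 := by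
        linear_combination e
          - B (fderiv ℝ σ p X) (fderiv ℝ (fderiv ℝ σ) p X X) * hcsq
      rcases mul_eq_zero.mp hfac with h1 | h2
      · exact absurd h1 hc0
      rcases mul_eq_zero.mp h2 with h3 | h4
      · exact h3
      · exact absurd h4 (hL0 X hX)
    -- consequences
    have hLfix : ∀ X, h p (fderiv ℝ σ p X) = c p • fderiv ℝ σ p X := by
      intro X; rw [hF2 p hpU X, hdc X, zero_smul, zero_add]
    obtain ⟨μ₀, hμ₀⟩ := hF3 X₀ X₀
    have hμ₀' : h p (fderiv ℝ (fderiv ℝ σ) p X₀ X₀)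
        = μ₀ • σ p + c p • fderiv ℝ (fderiv ℝ σ) p X₀ X₀ := by
      rw [hμ₀, hdc X₀]; simp
    have hμ₀0 : μ₀ = 0 := by
      have e := horth p (fderiv ℝ (fderiv ℝ σ) p X₀ X₀) (fderiv ℝ (fderiv ℝ σ) p X₀ X₀)
      rw [hμ₀'] at e
      simp only [map_add, map_smul, LinearMap.add_apply, LinearMap.smul_apply,
        smul_eq_mul] at e
      have hQs : B (fderiv ℝ (fderiv ℝ σ) p X₀ X₀) (σ p)
          = - B (fderiv ℝ σ p X₀) (fderiv ℝ σ p X₀) := (hBsym _ _).trans (hBQ p X₀ X₀)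
      rw [hnull p, hBQ p X₀ X₀, hQs] at e
      have hfac : μ₀ * (c p * B (fderiv ℝ σ p X₀) (fderiv ℝ σ p X₀)) = 0 := by
        linear_combination (-(1:ℝ)/2) * e
          + (B (fderiv ℝ (fderiv ℝ σ) p X₀ X₀) (fderiv ℝ (fderiv ℝ σ) p X₀ X₀) / 2) * hcsq
      rcases mul_eq_zero.mp hfac with h1 | h2
      · exact h1
      rcases mul_eq_zero.mp h2 with h3 | h4
      · exact absurd h3 hc0
      · exact absurd h4 (hL0 X₀ hX₀)
    have hQfix : ∀ Y X, h p (fderiv ℝ (fderiv ℝ σ) p Y X)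
        = c p • fderiv ℝ (fderiv ℝ σ) p Y X := by
      intro Y X
      obtain ⟨μ, hμ⟩ := hF3 Y X
      have hμ' : h p (fderiv ℝ (fderiv ℝ σ) p Y X)
          = μ • σ p + c p • fderiv ℝ (fderiv ℝ σ) p Y X := by
        rw [hμ, hdc X, hdc Y]; simp
      have e := horth p (fderiv ℝ (fderiv ℝ σ) p Y X) (fderiv ℝ (fderiv ℝ σ) p X₀ X₀)
      rw [hμ', hμ₀', hμ₀0, zero_smul, zero_add] at e
      simp only [map_add, map_smul, LinearMap.add_apply, LinearMap.smul_apply,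
        smul_eq_mul] at e
      rw [hBQ p X₀ X₀] at e
      have hfac : μ * (c p * B (fderiv ℝ σ p X₀) (fderiv ℝ σ p X₀)) = 0 := by
        linear_combination - e
          + (B (fderiv ℝ (fderiv ℝ σ) p Y X) (fderiv ℝ (fderiv ℝ σ) p X₀ X₀)) * hcsq
      have hμ0 : μ = 0 := by
        rcases mul_eq_zero.mp hfac with h1 | h2
        · exact h1
        rcases mul_eq_zero.mp h2 with h3 | h4
        · exact absurd h3 hc0
        · exact absurd h4 (hL0 X₀ hX₀)
      rw [hμ', hμ0, zero_smul, zero_add]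
    -- spanning
    have hall : ∀ v, h p v = c p • v := by
      intro v
      have hv : v ∈ Submodule.span ℝ ({σ p} ∪ Set.range (fderiv ℝ σ p) ∪
          Set.range (fun YZ : E × E =>
            fderiv ℝ (fun q => fderiv ℝ σ q YZ.2) p YZ.1)) := by
        rw [hder p]; trivial
      refine Submodule.span_induction ?_ ?_ ?_ ?_ hv
      · rintro x ((hx | ⟨Y, rfl⟩) | ⟨YZ, rfl⟩)
        · rw [Set.mem_singleton_iff] at hx; rw [hx]; exact hceq
        · exact hLfix Y
        · dsimp only; rw [hQeq]; exact hQfix YZ.1 YZ.2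
      · simp
      · intro a b _ _ ha hb; rw [map_add, ha, hb, smul_add]
      · intro t a _ ha; rw [map_smul, ha, smul_comm]
    refine ⟨c p, ?_, hall⟩
    rcases mul_eq_zero.mp (show (c p - 1) * (c p + 1) = 0 by linear_combination hcsq)
      with h1 | h2
    · left; linarith
    · right; linarith
  -- globalization via connectedness
  have hAcl : IsClosed {x : E | ∀ v, h x v = v} := by
    have hrw : {x : E | ∀ v, h x v = v} = ⋂ v, {x : E | h x v = v} := by
      ext x; simp [Set.mem_iInter]
    rw [hrw]
    exact isClosed_iInter fun v =>
      isClosed_eq (hh.continuous.clm_apply continuous_const) continuous_const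
  have hA'cl : IsClosed {x : E | ∀ v, h x v = -v} := by
    have hrw : {x : E | ∀ v, h x v = -v} = ⋂ v, {x : E | h x v = -v} := by
      ext x; simp [Set.mem_iInter]
    rw [hrw]
    exact isClosed_iInter fun v =>
      isClosed_eq (hh.continuous.clm_apply continuous_const) continuous_const
  have hcover : ∀ x : E, (∀ v, h x v = v) ∨ (∀ v, h x v = -v) := by
    intro x
    obtain ⟨c₀, hc₀, hx⟩ := key x
    rcases hc₀ with rfl | rfl
    · left; intro v; rw [hx v, one_smul]
    · right; intro v; rw [hx v, neg_one_smul]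
  have hdisj : ∀ x : E, ¬((∀ v, h x v = v) ∧ (∀ v, h x v = -v)) := by
    rintro x ⟨h1, h2⟩
    have hx : σ x = -σ x := (h1 (σ x)).symm.trans (h2 (σ x))
    have hx2 : (2 : ℝ) • σ x = 0 := by
      rw [two_smul]; nth_rewrite 2 [hx]; simp
    exact hσ0 x ((smul_eq_zero.mp hx2).resolve_left two_ne_zero)
  haveI : PreconnectedSpace E :=
    ⟨(convex_univ : Convex ℝ (Set.univ : Set E)).isPreconnected⟩
  have hcompl : ({x : E | ∀ v, h x v = v})ᶜ = {x : E | ∀ v, h x v = -v} := by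
    ext x
    constructor
    · intro hx; exact (hcover x).resolve_left hx
    · intro hx hxA; exact hdisj x ⟨hxA, hx⟩
  have hAopen : IsOpen {x : E | ∀ v, h x v = v} := by
    have := hA'cl
    rw [← hcompl] at this
    simpa using this.isOpen_compl
  rcases isClopen_iff.mp ⟨hAcl, hAopen⟩ with hempty | huniv
  · right
    intro x v
    have hx : x ∈ ({x : E | ∀ v, h x v = v})ᶜ := by
      rw [hempty]; simp
    rw [hcompl] at hx
    exact hx v
  · left
    intro x v
    have hx : x ∈ {x : E | ∀ v, h x v = v} := by rw [huniv]; trivial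
    exact hx v
end
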